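/- arXiv:2210.03399 — 2 statements merged into one kernel-verified Lean document; each statement's English description precedes it below -/
import Mathlib

section
/- Let G be a split graph of order n that arises from the disjoint union of a clique C of order c and an independent set I of order n−c (with n−c ≥ 1) by adding m edges, each joining a vertex of C to a vertex of I. Then Mo(G) ≤ (n + c − 1)·m − 2m²/(n − c). -/
/-- `nG G u v` is the number of vertices of `G` whose distance to `u` is strictly
smaller than their distance to `v` (vertices at infinite distance to both `u` and `v`
are counted for neither, since the extended distance `⊤` is not `< ⊤`). -/
noncomputable def nG {V : Type*} [Fintype V] (G : SimpleGraph V) (u v : V) : ℕ :=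
  Set.ncard {w : V | G.edist w u < G.edist w v}

/-- The Mostar index `Mo(G) = ∑_{uv ∈ E(G)} |nG(u,v) - nG(v,u)|` of a finite simple graph. -/
noncomputable def mostar {V : Type*} [Fintype V] (G : SimpleGraph V) : ℤ :=
  ∑ e ∈ (Set.toFinite G.edgeSet).toFinset,
    Sym2.lift ⟨fun u v => |(nG G u v : ℤ) - (nG G v u : ℤ)|, fun _ _ => abs_sub_comm _ _⟩ e

/-!
Count `2 · Mo(G)` over ordered adjacent pairs. In a split graph every non-isolated vertex is
within distance two of each clique vertex, so the sets counted by `nG` are read off from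
adjacency. For a clique edge `uv`, `nG u v - nG v u = d u - d v`, where `d` counts neighbours
in `I = Cᶜ`; for an edge `uv` with `v ∈ I`, only `v` itself is closer to `v`, and the vertices
closer to `u` avoid `v` and its other neighbours, so that term is at most `n - 1 - deg v`.
Both `∑ d` and `∑_{v ∈ I} deg v` equal `m`. With `s = n - c`, the bound
`|a - b| ≤ a + b - 2ab/s` on `[0, s]` gives `cm - m²/s` for the clique part, and
Cauchy–Schwarz `∑ deg² ≥ m²/s` gives `(n - 1)m - m²/s` for the cross part.
-/

open Finset

lemma abs_sub_le_add_sub_two_mul_mul_div {a b r : ℝ} (ha : 0 ≤ a) (hb : 0 ≤ b)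
    (har : a ≤ r) (hbr : b ≤ r) : |a - b| ≤ a + b - 2 * a * b / r := by
  have hr : 0 ≤ r := ha.trans har
  have hab : a * b / r ≤ b := by
    rw [mul_comm, mul_div_assoc]; exact mul_le_of_le_one_right hb (div_le_one_of_le₀ har hr)
  have hba : a * b / r ≤ a := by
    rw [mul_div_assoc]; exact mul_le_of_le_one_right ha (div_le_one_of_le₀ hbr hr)
  rw [abs_sub_le_iff, mul_assoc, mul_div_assoc]
  constructor <;> linarith

lemma sum_sum_abs_sub_le {ι : Type*} (s : Finset ι) (x : ι → ℝ) {r : ℝ}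
    (hx₀ : ∀ i ∈ s, 0 ≤ x i) (hxr : ∀ i ∈ s, x i ≤ r) :
    ∑ i ∈ s, ∑ j ∈ s, |x i - x j| ≤
      2 * #s * ∑ i ∈ s, x i - 2 * (∑ i ∈ s, x i) ^ 2 / r := by
  calc ∑ i ∈ s, ∑ j ∈ s, |x i - x j|
      ≤ ∑ i ∈ s, ∑ j ∈ s, (x i + x j - 2 * x i * x j / r) :=
        sum_le_sum fun i hi => sum_le_sum fun j hj =>
          abs_sub_le_add_sub_two_mul_mul_div (hx₀ i hi) (hx₀ j hj) (hxr i hi) (hxr j hj)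
    _ = 2 * #s * ∑ i ∈ s, x i - 2 * (∑ i ∈ s, x i) ^ 2 / r := by
        simp only [sum_sub_distrib, sum_add_distrib, sum_const, nsmul_eq_mul, ← sum_div,
          ← mul_sum, ← sum_mul]
        ring

lemma sum_mul_sub_le {ι : Type*} (s : Finset ι) (x : ι → ℝ) (N : ℝ) :
    ∑ i ∈ s, x i * (N - x i) ≤ N * ∑ i ∈ s, x i - (∑ i ∈ s, x i) ^ 2 / #s := by
  have hcs : (∑ i ∈ s, x i) ^ 2 / #s ≤ ∑ i ∈ s, x i ^ 2 :=
    div_le_of_le_mul₀ (Nat.cast_nonneg _) (sum_nonneg fun i _ => sq_nonneg _)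
      (by rw [mul_comm]; exact sq_sum_le_card_mul_sum_sq)
  have hexp : ∑ i ∈ s, x i * (N - x i) = N * ∑ i ∈ s, x i - ∑ i ∈ s, x i ^ 2 := by
    rw [mul_sum, ← sum_sub_distrib]; exact sum_congr rfl fun i _ => by ring
  linarith

namespace SimpleGraph

lemma two_nsmul_sum_edgeFinset_lift {V : Type*} [Fintype V] [DecidableEq V] (G : SimpleGraph V)
    [DecidableRel G.Adj] {M : Type*} [AddCommMonoid M]
    (f : {f : V → V → M // ∀ a b, f a b = f b a}) :
    2 • ∑ e ∈ G.edgeFinset, Sym2.lift f e =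
      ∑ u, ∑ v, if G.Adj u v then f.1 u v else 0 := by
  have hdarts :
      ∑ d : G.Dart, Sym2.lift f d.edge = 2 • ∑ e ∈ G.edgeFinset, Sym2.lift f e := by
    rw [← sum_fiberwise_of_maps_to (g := Dart.edge) (t := G.edgeFinset)
      (fun d _ => mem_edgeFinset.mpr d.edge_mem), smul_sum]
    refine sum_congr rfl fun e he => ?_
    rw [sum_congr rfl fun d hd => by rw [(mem_filter.mp hd).2], sum_const,
      G.dart_edge_fiber_card e (mem_edgeFinset.mp he)]
  rw [← hdarts, ← Fintype.sum_prod_type', ← sum_filter]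
  refine sum_bij' (fun d _ => d.toProd) (fun p hp => ⟨p, (mem_filter.mp hp).2⟩) ?_ ?_ ?_ ?_ ?_
    <;> simp [Dart.edge]

variable {V : Type*} {G : SimpleGraph V}

lemma one_lt_edist_of_ne_of_not_adj {u v : V} (hne : u ≠ v) (h : ¬G.Adj u v) :
    1 < G.edist u v := by
  rw [← not_le, edist_le_one_iff_adj_or_eq]; tauto

lemma edist_le_one_of_lt_two {u v : V} (h : G.edist u v < 2) : G.edist u v ≤ 1 :=
  Order.le_of_lt_add_one (by rwa [one_add_one_eq_two])

lemma exists_adj_of_edist_ne_top {u v : V} (hne : u ≠ v) (h : G.edist u v ≠ ⊤) :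
    ∃ w, G.Adj u w := by
  obtain ⟨p, -⟩ := exists_walk_of_edist_ne_top h
  cases p with
  | nil => exact absurd rfl hne
  | cons h _ => exact ⟨_, h⟩

section Mostar

variable [Fintype V]

lemma nG_eq_card_filter (u v : V) :
    nG G u v = #{w | G.edist w u < G.edist w v} := by
  simp [nG, Set.ncard_eq_toFinset_card']

variable (G) in
lemma one_le_nG {u v : V} (huv : u ≠ v) : 1 ≤ nG G u v := by
  rw [nG_eq_card_filter]
  exact card_pos.mpr ⟨u, by simpa using edist_pos_of_ne huv⟩

variable (G) in
noncomputable def mostarTerm [DecidableRel G.Adj] (u v : V) : ℤ :=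
  if G.Adj u v then |(nG G u v : ℤ) - nG G v u| else 0

variable [DecidableRel G.Adj]

lemma mostarTerm_comm (u v : V) : mostarTerm G u v = mostarTerm G v u := by
  simp only [mostarTerm, G.adj_comm, abs_sub_comm]

lemma two_mul_mostar [DecidableEq V] : 2 * mostar G = ∑ u, ∑ v, mostarTerm G u v := by
  have hE : (Set.toFinite G.edgeSet).toFinset = G.edgeFinset := by ext; simp
  rw [mostar, hE, two_mul, ← two_nsmul, two_nsmul_sum_edgeFinset_lift]
  rfl

end Mostar

section Split

variable {C : Finset V} (hclique : ∀ u ∈ C, ∀ v ∈ C, u ≠ v → G.Adj u v)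
  (hindep : ∀ u ∉ C, ∀ v ∉ C, ¬ G.Adj u v)

section Independent

variable [Fintype V] [DecidableEq V] [DecidableRel G.Adj]
include hindep

lemma card_filter_adj_eq_degree {v : V} (hv : v ∉ C) : #{u ∈ C | G.Adj v u} = G.degree v := by
  rw [← card_neighborFinset_eq_degree]
  congr 1
  ext u
  simp only [mem_filter, mem_neighborFinset, and_iff_right_iff_imp]
  intro hvu
  by_contra hu
  exact hindep v hv u hu hvu

lemma sum_card_filter_adj_eq_sum_degree :
    ∑ u ∈ C, #{x ∈ Cᶜ | G.Adj u x} = ∑ v ∈ Cᶜ, G.degree v := by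
  calc ∑ u ∈ C, #{x ∈ Cᶜ | G.Adj u x} = ∑ v ∈ Cᶜ, #{u ∈ C | G.Adj u v} :=
        sum_card_bipartiteAbove_eq_sum_card_bipartiteBelow G.Adj
    _ = ∑ v ∈ Cᶜ, G.degree v := sum_congr rfl fun v hv => by
        simp_rw [G.adj_comm _ v]
        exact card_filter_adj_eq_degree hindep (mem_compl.mp hv)

lemma card_filter_edgeFinset_eq_sum_degree :
    #{e ∈ G.edgeFinset | ∃ v ∈ e, v ∉ C} = ∑ v ∈ Cᶜ, G.degree v := by
  have hunion :
      {e ∈ G.edgeFinset | ∃ v ∈ e, v ∉ C} = Cᶜ.biUnion fun v => G.incidenceFinset v := by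
    ext e
    simp only [mem_filter, mem_edgeFinset, mem_biUnion, mem_compl, mem_incidenceFinset,
      incidenceSet]
    exact ⟨fun ⟨he, v, hv, hvC⟩ => ⟨v, hvC, he, hv⟩,
      fun ⟨v, hvC, he, hv⟩ => ⟨he, v, hv, hvC⟩⟩
  rw [hunion, card_biUnion]
  · simp only [card_incidenceFinset_eq_degree]
  intro u hu v hv huv
  rw [Function.onFun, Finset.disjoint_left]
  intro e heu hev
  have he := G.incidenceSet_inter_incidenceSet_subset huv
    ⟨(mem_incidenceFinset _ _ _).mp heu, (mem_incidenceFinset _ _ _).mp hev⟩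
  have hadj : G.Adj u v := by
    rw [← mem_edgeSet, ← Set.mem_singleton_iff.mp he]
    exact ((mem_incidenceFinset _ _ _).mp heu).1
  exact hindep u (mem_compl.mp hu) v (mem_compl.mp hv) hadj

end Independent

include hclique

lemma edist_le_one_of_mem {u v : V} (hu : u ∈ C) (hv : v ∈ C) : G.edist u v ≤ 1 := by
  rw [edist_le_one_iff_adj_or_eq]
  by_cases huv : u = v
  · exact .inr huv
  · exact .inl (hclique u hu v hv huv)

include hindep

lemma edist_le_two_of_adj {w y x : V} (hwy : G.Adj w y) (hx : x ∈ C) : G.edist w x ≤ 2 := by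
  by_cases hw : w ∈ C
  · exact (edist_le_one_of_mem hclique hw hx).trans one_le_two
  have hy : y ∈ C := by by_contra hy; exact hindep w hw y hy hwy
  calc G.edist w x ≤ G.edist w y + G.edist y x := G.edist_triangle
    _ ≤ 1 + 1 :=
      add_le_add (edist_eq_one_iff_adj.mpr hwy).le (edist_le_one_of_mem hclique hy hx)
    _ = 2 := one_add_one_eq_two

lemma adj_of_edist_lt_edist {w u v : V} (hv : v ∈ C) (hwu : w ≠ u)
    (h : G.edist w u < G.edist w v) : G.Adj w u := by
  obtain ⟨y, hwy⟩ := exists_adj_of_edist_ne_top hwu (h.trans_le le_top).ne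
  have := edist_le_one_of_lt_two (h.trans_le (edist_le_two_of_adj hclique hindep hwy hv))
  exact (edist_le_one_iff_adj_or_eq.mp this).resolve_right hwu

lemma edist_lt_edist_iff_of_mem_of_notMem {u v w : V} (hu : u ∈ C) (hv : v ∉ C)
    (huv : G.Adj u v) :
    G.edist w v < G.edist w u ↔ w = v := by
  constructor
  · intro h
    by_contra hwv
    have hw : w ∈ C := by
      by_contra hw; exact hindep w hw v hv (adj_of_edist_lt_edist hclique hindep hu hwv h)
    exact hwv <| edist_eq_zero_iff.mp <| Order.lt_one_iff.mp <|
      h.trans_le (edist_le_one_of_mem hclique hw hu)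
  · rintro rfl
    simpa using edist_pos_of_ne huv.ne'

variable [Fintype V] [DecidableEq V]

lemma nG_eq_one_of_mem_of_notMem {u v : V} (hu : u ∈ C) (hv : v ∉ C) (huv : G.Adj u v) :
    nG G v u = 1 := by
  rw [nG_eq_card_filter,
    filter_congr fun w _ => edist_lt_edist_iff_of_mem_of_notMem hclique hindep hu hv huv]
  rw [filter_eq', if_pos (mem_univ v), card_singleton]

variable [DecidableRel G.Adj]

lemma edist_lt_edist_iff_of_mem_of_mem {u v w : V} (hu : u ∈ C) (hv : v ∈ C) (huv : u ≠ v) :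
    G.edist w u < G.edist w v ↔
      w ∈ insert u ({x ∈ Cᶜ | G.Adj u x} \ {x ∈ Cᶜ | G.Adj v x}) := by
  simp only [mem_insert, mem_sdiff, mem_filter, mem_compl, not_and]
  constructor
  · intro h
    refine or_iff_not_imp_left.mpr fun hwu => ?_
    have hwv : ¬G.Adj w v := fun hwv => hwu <| edist_eq_zero_iff.mp <|
      Order.lt_one_iff.mp (edist_eq_one_iff_adj.mpr hwv ▸ h)
    have hwC : w ∉ C := fun hw => hwv <| hclique w hw v hv fun hwv' => by
      subst hwv'; simp at h
    exact ⟨⟨hwC, (adj_of_edist_lt_edist hclique hindep hv hwu h).symm⟩,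
      fun _ hvw => hwv hvw.symm⟩
  · rintro (rfl | ⟨⟨hwC, huw⟩, hvw⟩)
    · simpa using edist_pos_of_ne huv
    · rw [edist_eq_one_iff_adj.mpr huw.symm]
      exact one_lt_edist_of_ne_of_not_adj (fun h => hwC (h ▸ hv)) fun h => hvw hwC h.symm

lemma nG_of_mem_of_mem {u v : V} (hu : u ∈ C) (hv : v ∈ C) (huv : u ≠ v) :
    nG G u v = #({x ∈ Cᶜ | G.Adj u x} \ {x ∈ Cᶜ | G.Adj v x}) + 1 := by
  rw [nG_eq_card_filter,
    filter_congr fun w _ => edist_lt_edist_iff_of_mem_of_mem hclique hindep hu hv huv,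
    filter_mem_eq_inter, univ_inter, card_insert_of_notMem (by simp [hu])]

lemma nG_sub_nG_of_mem_of_mem {u v : V} (hu : u ∈ C) (hv : v ∈ C) (huv : u ≠ v) :
    (nG G u v : ℤ) - nG G v u = #{x ∈ Cᶜ | G.Adj u x} - #{x ∈ Cᶜ | G.Adj v x} := by
  rw [nG_of_mem_of_mem hclique hindep hu hv huv, nG_of_mem_of_mem hclique hindep hv hu huv.symm]
  have := card_sdiff_add_card_inter {x ∈ Cᶜ | G.Adj u x} {x ∈ Cᶜ | G.Adj v x}
  have := card_sdiff_add_card_inter {x ∈ Cᶜ | G.Adj v x} {x ∈ Cᶜ | G.Adj u x}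
  rw [inter_comm] at this
  omega

lemma nG_add_degree_le {u v : V} (hu : u ∈ C) (hv : v ∉ C) (huv : G.Adj u v) :
    nG G u v + G.degree v ≤ Fintype.card V := by
  have hsub : ({w | G.edist w u < G.edist w v} : Finset V) ⊆
      (insert v ((G.neighborFinset v).erase u))ᶜ := by
    intro w hw
    simp only [mem_filter, mem_univ, true_and] at hw
    simp only [mem_compl, mem_insert, mem_erase, mem_neighborFinset, not_or, not_and]
    refine ⟨by rintro rfl; simp at hw, fun hwu hvw => ?_⟩
    have hwC : w ∈ C := by by_contra hwC; exact hindep v hv w hwC hvw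
    rw [edist_eq_one_iff_adj.mpr (hclique w hwC u hu hwu),
      edist_eq_one_iff_adj.mpr hvw.symm] at hw
    exact lt_irrefl _ hw
  have hdeg : #(insert v ((G.neighborFinset v).erase u)) = G.degree v := by
    rw [card_insert_of_notMem (by simp), card_erase_of_mem (by simpa using huv.symm),
      card_neighborFinset_eq_degree]
    have : 0 < G.degree v := G.degree_pos_iff_exists_adj v |>.mpr ⟨u, huv.symm⟩
    omega
  rw [nG_eq_card_filter, ← hdeg, ← card_compl_add_card (insert v _)]
  exact Nat.add_le_add_right (card_le_card hsub) _

lemma abs_nG_sub_nG_le_of_mem_of_notMem {u v : V} (hu : u ∈ C) (hv : v ∉ C)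
    (huv : G.Adj u v) :
    |(nG G u v : ℤ) - nG G v u| ≤ Fintype.card V - 1 - G.degree v := by
  have h₁ := one_le_nG G huv.ne
  have h₂ := nG_add_degree_le hclique hindep hu hv huv
  rw [nG_eq_one_of_mem_of_notMem hclique hindep hu hv huv, abs_of_nonneg (by omega)]
  omega

lemma mostarTerm_of_mem_of_mem {u v : V} (hu : u ∈ C) (hv : v ∈ C) :
    mostarTerm G u v = |(#{x ∈ Cᶜ | G.Adj u x} : ℤ) - #{x ∈ Cᶜ | G.Adj v x}| := by
  by_cases huv : u = v
  · simp [mostarTerm, huv]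
  · rw [mostarTerm, if_pos (hclique u hu v hv huv),
      nG_sub_nG_of_mem_of_mem hclique hindep hu hv huv]

lemma sum_mostarTerm_le_of_notMem {v : V} (hv : v ∉ C) :
    ∑ u ∈ C, mostarTerm G v u ≤ G.degree v * ((Fintype.card V : ℤ) - 1 - G.degree v) := by
  calc ∑ u ∈ C, mostarTerm G v u
      ≤ ∑ u ∈ C, if G.Adj v u then (Fintype.card V : ℤ) - 1 - G.degree v else 0 := by
        refine sum_le_sum fun u hu => ?_
        rw [mostarTerm]
        split_ifs with hvu
        · rw [abs_sub_comm]
          exact abs_nG_sub_nG_le_of_mem_of_notMem hclique hindep hu hv hvu.symm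
        · rfl
    _ = G.degree v * ((Fintype.card V : ℤ) - 1 - G.degree v) := by
        rw [← sum_filter, sum_const, card_filter_adj_eq_degree hindep hv, nsmul_eq_mul]

lemma two_mul_mostar_le :
    2 * mostar G ≤
      ∑ u ∈ C, ∑ v ∈ C, |(#{x ∈ Cᶜ | G.Adj u x} : ℤ) - #{x ∈ Cᶜ | G.Adj v x}|
      + 2 * ∑ v ∈ Cᶜ, (G.degree v : ℤ) * ((Fintype.card V : ℤ) - 1 - G.degree v) := by
  have hsplit : 2 * mostar G = ∑ u ∈ C, ∑ v ∈ C, mostarTerm G u v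
      + 2 * ∑ v ∈ Cᶜ, ∑ u ∈ C, mostarTerm G v u := by
    rw [two_mul_mostar, ← sum_add_sum_compl C]
    simp only [← sum_add_sum_compl C (mostarTerm G _), sum_add_distrib]
    have hII : ∑ u ∈ Cᶜ, ∑ v ∈ Cᶜ, mostarTerm G u v = 0 :=
      sum_eq_zero fun u hu => sum_eq_zero fun v hv => by
        simp [mostarTerm, hindep u (mem_compl.mp hu) v (mem_compl.mp hv)]
    rw [sum_comm (s := C) (t := Cᶜ), hII,
      sum_congr rfl fun v _ => sum_congr rfl fun u _ => mostarTerm_comm u v]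
    ring
  rw [hsplit, sum_congr rfl fun u hu => sum_congr rfl fun v hv =>
    mostarTerm_of_mem_of_mem hclique hindep hu hv]
  gcongr with v hv
  exact sum_mostarTerm_le_of_notMem hclique hindep (mem_compl.mp hv)

end Split

end SimpleGraph

open SimpleGraph

theorem mostar_split_le_general {V : Type*} [Fintype V] [DecidableEq V] (G : SimpleGraph V)
    [DecidableRel G.Adj] (n c m : ℕ) (hn : Fintype.card V = n)
    (C : Finset V) (hC : C.card = c)
    (hclique : ∀ u ∈ C, ∀ v ∈ C, u ≠ v → G.Adj u v)
    (hindep : ∀ u ∉ C, ∀ v ∉ C, ¬ G.Adj u v)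
    (hm : (G.edgeFinset.filter fun e => ∃ v ∈ e, v ∉ C).card = m) :
    (mostar G : ℝ) ≤ ((n : ℝ) + (c : ℝ) - 1) * (m : ℝ) - 2 * (m : ℝ) ^ 2 / ((n : ℝ) - (c : ℝ)) := by
  subst hn hC
  have hcompl : (#Cᶜ : ℝ) = Fintype.card V - #C := by
    rw [card_compl, Nat.cast_sub (card_le_univ C)]
  have hdeg : ∑ v ∈ Cᶜ, (G.degree v : ℝ) = m := by
    rw [← hm]
    exact_mod_cast (card_filter_edgeFinset_eq_sum_degree hindep).symm
  have hD : ∑ u ∈ C, (#{x ∈ Cᶜ | G.Adj u x} : ℝ) = m := by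
    rw [← hdeg]
    exact_mod_cast sum_card_filter_adj_eq_sum_degree hindep
  have hmostar : 2 * (mostar G : ℝ) ≤ ∑ u ∈ C, ∑ v ∈ C,
        |(#{x ∈ Cᶜ | G.Adj u x} : ℝ) - #{x ∈ Cᶜ | G.Adj v x}|
      + 2 * ∑ v ∈ Cᶜ, (G.degree v : ℝ) * ((Fintype.card V : ℝ) - 1 - G.degree v) := by
    exact_mod_cast two_mul_mostar_le hclique hindep
  have hclique_part := sum_sum_abs_sub_le C (fun u => (#{x ∈ Cᶜ | G.Adj u x} : ℝ))
    (fun _ _ => Nat.cast_nonneg _) (fun _ _ => Nat.cast_le.mpr (card_filter_le _ _))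
  have hcross_part := sum_mul_sub_le Cᶜ (fun v => (G.degree v : ℝ)) (Fintype.card V - 1)
  rw [hD, hcompl] at hclique_part
  rw [hdeg, hcompl] at hcross_part
  linear_combination (hmostar + hclique_part + 2 * hcross_part) / 2

/-- If `G` is a split graph of order `n`, arising from a clique `C` of order `c` and an
independent set `I = Cᶜ` of order `n - c ≥ 1` by adding `m` edges between `C` and `I`,
then `Mo(G) ≤ (n + c - 1)·m - 2m²/(n - c)`. -/
theorem mostar_split_le {V : Type*} [Fintype V] [DecidableEq V] (G : SimpleGraph V)
    [DecidableRel G.Adj] (n c m : ℕ) (hn : Fintype.card V = n)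
    (C : Finset V) (hC : C.card = c)
    (hclique : ∀ u ∈ C, ∀ v ∈ C, u ≠ v → G.Adj u v)
    (hindep : ∀ u ∉ C, ∀ v ∉ C, ¬ G.Adj u v)
    (hm : (G.edgeFinset.filter fun e => ∃ v ∈ e, v ∉ C).card = m)
    (hcn : c < n) :
    (mostar G : ℝ) ≤ ((n : ℝ) + (c : ℝ) - 1) * (m : ℝ) - 2 * (m : ℝ) ^ 2 / ((n : ℝ) - (c : ℝ)) :=
  mostar_split_le_general G n c m hn C hC hclique hindep hm
end

section
/- If G is a bipartite simple graph of order n, then Mo(G) ≤ Σ_{uv∈E(G)} (n − 2·min{d_G(u), d_G(v)}), i.e., for every edge uv of G one has |n_G(u,v) − n_G(v,u)| ≤ n − 2·min{d_G(u), d_G(v)}. -/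
/-! In a triangle-free graph, for an edge `uv` every neighbour `w ≠ v` of `u` is at distance `1`
from `u` but at distance at least `2` from `v`; together with `u` itself this gives
`deg u ≤ n(u,v)`. As the sets counted by `n(u,v)` and `n(v,u)` are disjoint,
`n(u,v) + n(v,u) ≤ n`, so `|n(u,v) - n(v,u)| ≤ n - 2 min(deg u, deg v)`. Bipartite graphs are
triangle-free. -/

namespace SimpleGraph

variable {V : Type*} (G : SimpleGraph V)

lemma nG_add_nG_le_card [Fintype V] (u v : V) : nG G u v + nG G v u ≤ Fintype.card V := by
  have hdisj : Disjoint {w : V | G.edist w u < G.edist w v} {w | G.edist w v < G.edist w u} :=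
    Set.disjoint_left.mpr fun _ h₁ h₂ => lt_asymm (Set.mem_ofPred.mp h₁) h₂
  rw [nG, nG, ← Set.ncard_union_eq hdisj, ← Nat.card_eq_fintype_card, ← Set.ncard_univ]
  exact Set.ncard_le_ncard (Set.subset_univ _)

variable {G}

lemma one_lt_edist_of_not_adj {w v : V} (hne : w ≠ v) (hnadj : ¬ G.Adj w v) :
    1 < G.edist w v := by
  rw [← not_le, edist_le_one_iff_adj_or_eq]
  tauto

lemma swap_mem_nG_set_of_cliqueFree_three [DecidableEq V] (hG : G.CliqueFree 3) {u v w : V}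
    (huv : G.Adj u v) (huw : G.Adj u w) :
    Equiv.swap u v w ∈ {x : V | G.edist x u < G.edist x v} := by
  by_cases hwv : w = v
  · subst hwv
    simp [edist_eq_one_iff_adj.mpr huv]
  · have hvw : ¬ G.Adj w v := fun hwv' =>
      isIndepSet_neighborSet_of_triangleFree G hG u huw huv hwv hwv'
    rw [Equiv.swap_apply_of_ne_of_ne huw.ne.symm hwv, Set.mem_ofPred_eq,
      edist_eq_one_iff_adj.mpr huw.symm]
    exact one_lt_edist_of_not_adj hwv hvw

lemma degree_le_nG_of_cliqueFree_three [Fintype V] [DecidableRel G.Adj] (hG : G.CliqueFree 3)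
    {u v : V} (huv : G.Adj u v) : G.degree u ≤ nG G u v := by
  classical
  calc G.degree u = (G.neighborSet u).ncard := by
        rw [← card_neighborSet_eq_degree, Set.ncard_eq_toFinset_card', Set.toFinset_card]
    _ = (Equiv.swap u v '' G.neighborSet u).ncard :=
        (Set.ncard_image_of_injective _ (Equiv.injective _)).symm
    _ ≤ nG G u v := Set.ncard_le_ncard <| Set.image_subset_iff.mpr fun _ huw =>
        swap_mem_nG_set_of_cliqueFree_three hG huv huw

lemma abs_nG_sub_nG_le_of_cliqueFree_three [Fintype V] [DecidableRel G.Adj]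
    (hG : G.CliqueFree 3) {u v : V} (huv : G.Adj u v) :
    |(nG G u v : ℤ) - nG G v u| ≤ Fintype.card V - 2 * min (G.degree u : ℤ) (G.degree v) := by
  have hu := degree_le_nG_of_cliqueFree_three hG huv
  have hv := degree_le_nG_of_cliqueFree_three hG huv.symm
  have hsum := nG_add_nG_le_card G u v
  rw [abs_le]
  omega

end SimpleGraph

/-- If `G` is bipartite of order `n`, then for every edge `uv` one has
`|nG(u,v) - nG(v,u)| ≤ n - 2·min{d(u), d(v)}`, and consequently
`Mo(G) ≤ ∑_{uv ∈ E(G)} (n - 2·min{d(u), d(v)})`. -/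
theorem mostar_bipartite_le_degree_sum {V : Type*} [Fintype V]
    (G : SimpleGraph V) [DecidableRel G.Adj] (n : ℕ) (hn : Fintype.card V = n)
    (hbip : G.Colorable 2) :
    (∀ u v : V, G.Adj u v →
      |(nG G u v : ℤ) - (nG G v u : ℤ)| ≤ (n : ℤ) - 2 * min (G.degree u : ℤ) (G.degree v : ℤ)) ∧
    mostar G ≤ ∑ e ∈ G.edgeFinset,
      Sym2.lift ⟨fun u v => (n : ℤ) - 2 * min (G.degree u : ℤ) (G.degree v : ℤ),
        fun u v => by dsimp only; rw [min_comm]⟩ e := by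
  subst hn
  have hG : G.CliqueFree 3 := hbip.cliqueFree (by norm_num)
  have hedge := fun u v (huv : G.Adj u v) =>
    SimpleGraph.abs_nG_sub_nG_le_of_cliqueFree_three hG huv
  refine ⟨hedge, ?_⟩
  rw [mostar, Set.Finite.toFinset_eq_toFinset]
  refine Finset.sum_le_sum fun e he => ?_
  induction e using Sym2.ind with
  | _ u v => exact hedge u v (SimpleGraph.mem_edgeFinset.mp he)
end
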